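/- Let K be a field of characteristic zero and (L,[·,·]) a Lie algebra over K. If ·₁ and ·₂ are transposed Poisson structures on (L,[·,·]) that are orthogonal, i.e., a·₁b ∈ Ann(L,·₂) and a·₂b ∈ Ann(L,·₁) for all a,b ∈ L, then the operation a*b := a·₁b + a·₂b is a transposed Poisson structure on (L,[·,·]). -/

import Mathlib

open scoped Classical

noncomputable section

/-- A transposed Poisson structure on a Lie algebra `(L, ⁅·,·⁆)`: a bilinear, commutative,
associative product satisfying `2 • z · ⁅x, y⁆ = ⁅z · x, y⁆ + ⁅x, z · y⁆`. -/
def IsTPStructure (K L : Type*) [Field K] [LieRing L] [LieAlgebra K L]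
    (mul : L →ₗ[K] L →ₗ[K] L) : Prop :=
  (∀ a b : L, mul a b = mul b a) ∧
  (∀ a b c : L, mul (mul a b) c = mul a (mul b c)) ∧
  (∀ x y z : L, (2 : K) • mul z ⁅x, y⁆ = ⁅mul z x, y⁆ + ⁅x, mul z y⁆)

section Bilinear

variable {R M : Type*} [CommSemiring R] [AddCommMonoid M] [Module R M]
  {mul1 mul2 : M →ₗ[R] M →ₗ[R] M}

theorem comm_add_of_comm (hc1 : ∀ a b, mul1 a b = mul1 b a) (hc2 : ∀ a b, mul2 a b = mul2 b a)
    (a b : M) : (mul1 + mul2) a b = (mul1 + mul2) b a := by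
  simp only [LinearMap.add_apply, hc1 a b, hc2 a b]

/-- The cross terms `a ·₁ (b ·₂ c)` vanish by commutativity of `·₁` and orthogonality. -/
theorem assoc_add_of_orthogonal (hc1 : ∀ a b, mul1 a b = mul1 b a)
    (hc2 : ∀ a b, mul2 a b = mul2 b a)
    (ha1 : ∀ a b c, mul1 (mul1 a b) c = mul1 a (mul1 b c))
    (ha2 : ∀ a b c, mul2 (mul2 a b) c = mul2 a (mul2 b c))
    (horth1 : ∀ a b c, mul2 (mul1 a b) c = 0) (horth2 : ∀ a b c, mul1 (mul2 a b) c = 0)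
    (a b c : M) : (mul1 + mul2) ((mul1 + mul2) a b) c = (mul1 + mul2) a ((mul1 + mul2) b c) := by
  have hcross1 : mul1 a (mul2 b c) = 0 := by rw [hc1, horth2]
  have hcross2 : mul2 a (mul1 b c) = 0 := by rw [hc2, horth1]
  simp only [LinearMap.add_apply, map_add, horth1, horth2, hcross1, hcross2, ha1, ha2,
    add_zero, zero_add]

end Bilinear

theorem transposedLeibniz_add {K L : Type*} [CommRing K] [LieRing L] [LieAlgebra K L]
    {mul1 mul2 : L →ₗ[K] L →ₗ[K] L}
    (ht1 : ∀ x y z : L, (2 : K) • mul1 z ⁅x, y⁆ = ⁅mul1 z x, y⁆ + ⁅x, mul1 z y⁆)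
    (ht2 : ∀ x y z : L, (2 : K) • mul2 z ⁅x, y⁆ = ⁅mul2 z x, y⁆ + ⁅x, mul2 z y⁆)
    (x y z : L) :
    (2 : K) • (mul1 + mul2) z ⁅x, y⁆ = ⁅(mul1 + mul2) z x, y⁆ + ⁅x, (mul1 + mul2) z y⁆ := by
  simp only [LinearMap.add_apply, smul_add, ht1, ht2, add_lie, lie_add]
  abel

theorem statement2_general (K L : Type*) [Field K] [LieRing L] [LieAlgebra K L]
    (mul1 mul2 : L →ₗ[K] L →ₗ[K] L)
    (h1 : IsTPStructure K L mul1) (h2 : IsTPStructure K L mul2)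
    (horth1 : ∀ a b c : L, mul2 (mul1 a b) c = 0)
    (horth2 : ∀ a b c : L, mul1 (mul2 a b) c = 0) :
    IsTPStructure K L (mul1 + mul2) := by
  obtain ⟨hc1, ha1, ht1⟩ := h1
  obtain ⟨hc2, ha2, ht2⟩ := h2
  exact ⟨comm_add_of_comm hc1 hc2,
    assoc_add_of_orthogonal hc1 hc2 ha1 ha2 horth1 horth2,
    transposedLeibniz_add ht1 ht2⟩

/-- the orthogonal sum of two transposed Poisson structures is a
transposed Poisson structure.  Orthogonality: all `·₁`-products lie in `Ann(L, ·₂)`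
and vice versa. -/
theorem statement2 (K L : Type*) [Field K] [CharZero K] [LieRing L] [LieAlgebra K L]
    (mul1 mul2 : L →ₗ[K] L →ₗ[K] L)
    (h1 : IsTPStructure K L mul1) (h2 : IsTPStructure K L mul2)
    (horth1 : ∀ a b c : L, mul2 (mul1 a b) c = 0)
    (horth2 : ∀ a b c : L, mul1 (mul2 a b) c = 0) :
    IsTPStructure K L (mul1 + mul2) :=
  statement2_general K L mul1 mul2 h1 h2 horth1 horth2
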